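/- arXiv:0706.4100 — 2 statements merged into one kernel-verified Lean document; each statement's English description precedes it below -/
import Mathlib

section
/- Let d ≥ 2 and k be positive integers, and let T be a tree on at least k+1 vertices with maximum degree at most d. Then there exists an edge e ∈ E(T) such that at least one of the two trees obtained from T by deleting e has at least k and at most (d−1)(k−1)+1 vertices. -/
/-!
Call the vertex set of the component of `u` in `T - uw` the branch of `uw` at `u`. The neighbour
of a leaf has a branch with all but one vertex, hence at least `k` of them. Among the branches with
at least `k` vertices take a smallest one, at `u` say. For every other neighbour `v` of `u`, the
branch of `vu` at `v` is a proper subset of it, so has fewer than `k` vertices; as the branch at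
`u` consists of `u` and these at most `d - 1` branches, it has at most `(d - 1)(k - 1) + 1`
vertices.
-/

open Set

theorem Set.ncard_biUnion_le_ncard_mul {ι α : Type*} {t : Set ι} (ht : t.Finite)
    {s : ι → Set α} {n : ℕ} (h : ∀ i ∈ t, (s i).ncard ≤ n) :
    (⋃ i ∈ t, s i).ncard ≤ t.ncard * n := by
  calc (⋃ i ∈ t, s i).ncard = (⋃ i ∈ ht.toFinset, s i).ncard := by simp
    _ ≤ ∑ i ∈ ht.toFinset, (s i).ncard := ht.toFinset.set_ncard_biUnion_le s
    _ ≤ ht.toFinset.card * n := Finset.sum_le_card_nsmul _ _ _ (by simpa using h)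
    _ = t.ncard * n := by rw [ncard_eq_toFinset_card t ht]

namespace SimpleGraph

variable {V : Type*} {G : SimpleGraph V} {u v w x y : V}

lemma Walk.reachable_deleteEdges_of_notMem_support {H : SimpleGraph V} (hHG : H ≤ G)
    (p : H.Walk x y) (hu : u ∉ p.support) (v : V) : (G.deleteEdges {s(u, v)}).Reachable x y :=
  reachable_deleteEdges_iff_exists_walk.mpr ⟨p.mapLe hHG, fun h ↦
    hu (by simpa [support_mapLe_eq_support] using (p.mapLe hHG).fst_mem_support_of_mem_edges h)⟩

lemma reachable_deleteEdges_or_of_walk (p : G.Walk x u) (w : V) :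
    (G.deleteEdges {s(u, w)}).Reachable x u ∨ (G.deleteEdges {s(u, w)}).Reachable x w := by
  induction p with
  | nil => exact .inl .rfl
  | @cons a b c h q ih =>
    by_cases he : s(a, b) = s(c, w)
    · rcases Sym2.eq_iff.mp he with ⟨rfl, rfl⟩ | ⟨rfl, rfl⟩
      · exact .inl .rfl
      · exact .inr .rfl
    · have hab : (G.deleteEdges {s(c, w)}).Adj a b := deleteEdges_adj.mpr ⟨h, he⟩
      exact ih.imp hab.reachable.trans hab.reachable.trans

def branch (G : SimpleGraph V) (u w : V) : Set V :=
  ((G.deleteEdges {s(u, w)}).connectedComponentMk u).supp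

lemma mem_branch_iff : x ∈ G.branch u w ↔ (G.deleteEdges {s(u, w)}).Reachable x u := by
  rw [branch, ConnectedComponent.mem_supp_iff, ConnectedComponent.eq]

lemma mem_branch_self : u ∈ G.branch u w :=
  mem_branch_iff.mpr .rfl

lemma IsAcyclic.notMem_branch (hG : G.IsAcyclic) (h : G.Adj u w) : w ∉ G.branch u w :=
  fun hw ↦ isAcyclic_iff_forall_adj_isBridge.mp hG h (mem_branch_iff.mp hw).symm

lemma IsAcyclic.disjoint_branch (hG : G.IsAcyclic) (h : G.Adj u w) :
    Disjoint (G.branch u w) (G.branch w u) := by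
  refine Set.disjoint_left.mpr fun _ hxu hxw ↦ hG.notMem_branch h (mem_branch_iff.mpr ?_)
  rw [mem_branch_iff, Sym2.eq_swap] at hxw
  exact hxw.symm.trans (mem_branch_iff.mp hxu)

lemma Preconnected.branch_union_branch (hG : G.Preconnected) (u w : V) :
    G.branch u w ∪ G.branch w u = univ := by
  refine eq_univ_of_forall fun x ↦ ?_
  rw [mem_union, mem_branch_iff, mem_branch_iff, Sym2.eq_swap (a := w)]
  exact reachable_deleteEdges_or_of_walk (hG x u).some w

lemma IsTree.ncard_branch_add_ncard_branch [Finite V] (hG : G.IsTree) (h : G.Adj u w) :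
    (G.branch u w).ncard + (G.branch w u).ncard = Nat.card V := by
  rw [← ncard_union_eq (hG.isAcyclic.disjoint_branch h),
    hG.connected.preconnected.branch_union_branch, ncard_univ]

lemma branch_subset_insert_biUnion :
    G.branch u w ⊆ insert u (⋃ v ∈ G.neighborSet u \ {w}, G.branch v u) := by
  intro x hx
  obtain ⟨p, hp⟩ := (mem_branch_iff.mp hx).symm.exists_isPath
  cases p with
  | nil => exact mem_insert _ _
  | @cons _ b _ hub q =>
    obtain ⟨hub, hne⟩ := deleteEdges_adj.mp hub
    have hbw : b ≠ w := by rintro rfl; exact hne rfl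
    refine mem_insert_of_mem _ (mem_biUnion (x := b) ⟨hub, hbw⟩ (mem_branch_iff.mpr ?_))
    rw [Sym2.eq_swap]
    exact (q.reachable_deleteEdges_of_notMem_support (deleteEdges_le _)
      (Walk.cons_isPath_iff _ _ |>.mp hp).2 b).symm

lemma IsAcyclic.branch_ssubset_branch (hG : G.IsAcyclic) (huw : G.Adj u w) (huv : G.Adj u v)
    (hvw : v ≠ w) : G.branch v u ⊂ G.branch u w := by
  classical
  refine ssubset_of_subset_not_subset (fun x hx ↦ ?_)
    fun h ↦ hG.notMem_branch huv.symm (h mem_branch_self)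
  obtain ⟨p⟩ := mem_branch_iff.mp hx
  have hu : u ∉ p.support := fun hu ↦
    hG.notMem_branch huv.symm (mem_branch_iff.mpr ⟨(p.dropUntil u hu)⟩)
  have hvu : (G.deleteEdges {s(u, w)}).Adj v u := by
    refine deleteEdges_adj.mpr ⟨huv.symm, fun he ↦ ?_⟩
    rcases Sym2.eq_iff.mp he with ⟨rfl, -⟩ | ⟨rfl, -⟩
    · exact huv.ne rfl
    · exact hvw rfl
  exact mem_branch_iff.mpr
    ((p.reachable_deleteEdges_of_notMem_support (deleteEdges_le _) hu w).trans hvu.reachable)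

theorem IsAcyclic.exists_adj_le_ncard_branch_le [Finite V] (hG : G.IsAcyclic) {d k : ℕ}
    (hdeg : ∀ v, (G.neighborSet v).ncard ≤ d) (huw : G.Adj u w)
    (hk : k ≤ (G.branch u w).ncard) :
    ∃ u w, G.Adj u w ∧ k ≤ (G.branch u w).ncard ∧
      (G.branch u w).ncard ≤ (d - 1) * (k - 1) + 1 := by
  induction hn : (G.branch u w).ncard using Nat.strong_induction_on generalizing u w with
  | _ n ih =>
  by_cases hbig : ∃ v ∈ G.neighborSet u \ {w}, k ≤ (G.branch v u).ncard
  · obtain ⟨v, ⟨huv, hvw⟩, hkv⟩ := hbig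
    exact ih _ (hn ▸ ncard_lt_ncard (hG.branch_ssubset_branch huw huv hvw)) huv.symm hkv rfl
  push Not at hbig
  refine ⟨u, w, huw, hn ▸ hk, ?_⟩
  calc (G.branch u w).ncard
      ≤ (insert u (⋃ v ∈ G.neighborSet u \ {w}, G.branch v u)).ncard :=
        ncard_le_ncard branch_subset_insert_biUnion
    _ ≤ (⋃ v ∈ G.neighborSet u \ {w}, G.branch v u).ncard + 1 := ncard_insert_le _ _
    _ ≤ (G.neighborSet u \ {w}).ncard * (k - 1) + 1 := by
        gcongr
        exact ncard_biUnion_le_ncard_mul (toFinite _) fun v hv ↦ Nat.le_pred_of_lt (hbig v hv)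
    _ ≤ (d - 1) * (k - 1) + 1 := by
        gcongr
        rw [ncard_sdiff_singleton_of_mem (show w ∈ G.neighborSet u from huw)]
        exact Nat.sub_le_sub_right (hdeg u) 1

lemma IsTree.exists_adj_card_sub_one_le_ncard_branch [Fintype V] [Nontrivial V] (hG : G.IsTree) :
    ∃ u w, G.Adj u w ∧ Fintype.card V - 1 ≤ (G.branch u w).ncard := by
  classical
  obtain ⟨w, hw⟩ := hG.exists_vert_degree_one_of_nontrivial
  obtain ⟨u, hwu, hu⟩ := degree_eq_one_iff_existsUnique_adj.mp hw
  have hleaf : G.branch w u ⊆ {w} := fun x hx ↦ by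
    rcases branch_subset_insert_biUnion hx with rfl | hx
    · rfl
    · obtain ⟨v, ⟨hwv, hvu⟩, -⟩ := mem_iUnion₂.mp hx
      exact absurd (hu v hwv) hvu
  have hsum := hG.ncard_branch_add_ncard_branch hwu.symm
  have hw1 := ncard_singleton w ▸ ncard_le_ncard hleaf
  rw [Nat.card_eq_fintype_card] at hsum
  exact ⟨u, w, hwu.symm, by omega⟩

end SimpleGraph

theorem stmt_8_general (d k : ℕ) (hk : 1 ≤ k) {V : Type*} [Fintype V]
    (T : SimpleGraph V) (hT : T.IsTree) (hcard : k + 1 ≤ Fintype.card V)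
    (hdeg : ∀ v, (T.neighborSet v).ncard ≤ d) :
    ∃ u w, T.Adj u w ∧
      k ≤ ((T.deleteEdges {s(u, w)}).connectedComponentMk u).supp.ncard ∧
      ((T.deleteEdges {s(u, w)}).connectedComponentMk u).supp.ncard ≤
        (d - 1) * (k - 1) + 1 := by
  have : Nontrivial V := Fintype.one_lt_card_iff_nontrivial.mp (by omega)
  obtain ⟨u, w, huw, hlarge⟩ := hT.exists_adj_card_sub_one_le_ncard_branch
  exact hT.isAcyclic.exists_adj_le_ncard_branch_le hdeg huw (by omega)

/-- **Proposition 4.2.** Let `d ≥ 2` and `k ≥ 1` be integers, and let `T` be a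
tree on at least `k+1` vertices with maximum degree at most `d`. Then there is
an edge `e = (u,w)` of `T` such that one of the two trees obtained from `T` by
deleting `e` (namely, the component of `u`) has at least `k` and at most
`(d-1)(k-1)+1` vertices. -/
theorem stmt_8 (d k : ℕ) (hd : 2 ≤ d) (hk : 1 ≤ k) {V : Type*} [Fintype V]
    (T : SimpleGraph V) (hT : T.IsTree) (hcard : k + 1 ≤ Fintype.card V)
    (hdeg : ∀ v, (T.neighborSet v).ncard ≤ d) :
    ∃ u w, T.Adj u w ∧
      k ≤ ((T.deleteEdges {s(u, w)}).connectedComponentMk u).supp.ncard ∧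
      ((T.deleteEdges {s(u, w)}).connectedComponentMk u).supp.ncard ≤
        (d - 1) * (k - 1) + 1 :=
  stmt_8_general d k hk T hT hcard hdeg
end

section
/- Let K be a positive integer and δ, Δ real numbers satisfying K Δ² e^{−δ/(8K) + 1} < 1. Let H = (V,E) be a graph in which every vertex v satisfies δ ≤ d(v) ≤ Δ. Then H contains K pairwise disjoint sets of vertices S₁, S₂, …, S_K such that every vertex of H has at least δ/(2K) neighbors in each set S_i. -/
/-!
Colour the vertices uniformly at random with `K` colours and let `S_i` be the `i`-th colour
class. The bad event "`v` has fewer than `δ/(2K)` neighbours of colour `i`" depends only on the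
colours of `N(v)`. Markov's inequality applied to `2^{-X}`, where `X` counts the neighbours of
colour `i`, bounds its probability by `e^{-δ/(8K)}`, and it is mutually independent of the bad
events at all vertices `w` with `N(v) ∩ N(w) = ∅`, which leaves fewer than `KΔ²` events it may
depend on. The hypothesis is then exactly the condition `e p (D + 1) ≤ 1` of the symmetric
Lovász Local Lemma, which yields a colouring without bad events. The local lemma is proved for
the uniform measure on `V → α`, counting colourings instead of measuring them.
-/

open Finset

theorem exp_neg_one_le_one_sub_inv_pow {D : ℝ} (hD : 0 < D) {n : ℕ} (hn : n ≤ D) :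
    Real.exp (-1) ≤ (1 - 1 / (D + 1)) ^ n := by
  have h : Real.exp (-(1 / D)) ≤ 1 - 1 / (D + 1) := by
    have : 1 - 1 / (D + 1) = (1 + 1 / D)⁻¹ := by field_simp; ring
    rw [this, Real.exp_neg]
    exact inv_anti₀ (by positivity) (by linarith [Real.add_one_le_exp (1 / D)])
  calc Real.exp (-1) ≤ Real.exp (-(1 / D)) ^ n := by
        rw [← Real.exp_nat_mul, Real.exp_le_exp]
        have : (n : ℝ) / D ≤ 1 := (div_le_one hD).2 hn
        linarith [show (n : ℝ) * -(1 / D) = -(n / D) by ring]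
    _ ≤ (1 - 1 / (D + 1)) ^ n := pow_le_pow_left₀ (Real.exp_pos _).le h n

/-- Swapping the coordinates outside `s` is a bijection `(A ∩ B) × Ω ≃ A × B`. -/
theorem card_inter_mul_card_univ {V α : Type*} [Fintype V] [DecidableEq V] [Fintype α]
    [DecidableEq α] {A B : Finset (V → α)} {s : Set V} (hA : DependsOn (· ∈ A) s)
    (hB : DependsOn (· ∈ B) sᶜ) : #(A ∩ B) * Fintype.card (V → α) = #A * #B := by
  classical
  rw [← card_univ, ← card_product, ← card_product]
  have swap_swap (c d : V → α) : s.piecewise (s.piecewise c d) (s.piecewise d c) = c := by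
    funext x; by_cases hx : x ∈ s <;> simp [hx]
  refine card_nbij' (fun p => (s.piecewise p.1 p.2, s.piecewise p.2 p.1))
    (fun p => (s.piecewise p.1 p.2, s.piecewise p.2 p.1)) ?_ ?_ ?_ ?_
  · rintro ⟨c, d⟩ hcd
    simp only [coe_product, coe_inter, Set.mem_prod, Set.mem_inter_iff, mem_coe] at hcd ⊢
    refine ⟨(hA (x := c) fun x hx => ?_).mp hcd.1.1, (hB (x := c) fun x hx => ?_).mp hcd.1.2⟩
    · simp [hx]
    · simp [show x ∉ s from hx]
  · rintro ⟨a, b⟩ hab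
    simp only [coe_product, coe_inter, Set.mem_prod, Set.mem_inter_iff, mem_coe, coe_univ,
      Set.mem_univ, and_true] at hab ⊢
    refine ⟨(hA (y := a) fun x hx => ?_).mpr hab.1, (hB (y := b) fun x hx => ?_).mpr hab.2⟩
    · simp [hx]
    · simp [show x ∉ s from hx]
  · rintro ⟨c, d⟩ -
    simp only [swap_swap]
  · rintro ⟨a, b⟩ -
    simp only [swap_swap]

namespace LovaszLocalLemma

variable {V α ι : Type*} [Fintype V] [DecidableEq V] [Fintype α] [DecidableEq α]

open Classical in
noncomputable def avoid (A : ι → Finset (V → α)) (S : Finset ι) : Finset (V → α) :=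
  {c | ∀ k ∈ S, c ∉ A k}

variable {A : ι → Finset (V → α)}

theorem mem_avoid {S : Finset ι} {c : V → α} : c ∈ avoid A S ↔ ∀ k ∈ S, c ∉ A k := by
  simp [avoid]

theorem avoid_empty : avoid A ∅ = univ := by
  ext; simp [mem_avoid]

theorem avoid_anti {S T : Finset ι} (hST : S ⊆ T) : avoid A T ⊆ avoid A S :=
  fun _ hc => mem_avoid.2 fun k hk => mem_avoid.1 hc k (hST hk)

theorem dependsOn_mem_avoid {S : Finset ι} {s : Set V}
    (h : ∀ k ∈ S, DependsOn (· ∈ A k) s) : DependsOn (· ∈ avoid A S) s := by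
  intro _ _ hcd
  simp only [mem_avoid]
  exact propext <| forall₂_congr fun k hk => not_congr (h k hk hcd).to_iff

variable [DecidableEq ι]

theorem avoid_insert (S : Finset ι) (j : ι) : avoid A (insert j S) = avoid A S \ A j := by
  ext c; simp [mem_avoid, and_comm]

theorem sub_mul_card_avoid_le {x : ℝ} {S : Finset ι} {j : ι}
    (h : (#(A j ∩ avoid A S) : ℝ) ≤ x * #(avoid A S)) :
    (1 - x) * #(avoid A S) ≤ #(avoid A (insert j S)) := by
  rw [avoid_insert]
  have hsplit : (#(avoid A S \ A j) : ℝ) + #(A j ∩ avoid A S) = #(avoid A S) := by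
    rw [inter_comm]; exact_mod_cast card_sdiff_add_card_inter _ _
  linarith

theorem pow_mul_card_avoid_le {x : ℝ} (hx : x ≤ 1) (U : Finset ι) {T : Finset ι}
    (h : ∀ T' ⊆ T, ∀ j ∈ T, j ∉ T' →
      (#(A j ∩ avoid A (U ∪ T')) : ℝ) ≤ x * #(avoid A (U ∪ T'))) :
    (1 - x) ^ #T * #(avoid A U) ≤ #(avoid A (U ∪ T)) := by
  induction T using Finset.induction_on with
  | empty => simp
  | insert a T ha ih =>
    have ih := ih fun T' hT' j hj => h T' (hT'.trans (subset_insert a T)) j (mem_insert_of_mem hj)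
    have step := sub_mul_card_avoid_le (h T (subset_insert a T) a (mem_insert_self a T) ha)
    rw [union_insert, card_insert_of_notMem ha, pow_succ, mul_comm _ (1 - x), mul_assoc]
    exact (mul_le_mul_of_nonneg_left ih (sub_nonneg.2 hx)).trans step

variable {vbl : ι → Set V} {Γ : ι → Finset ι}

theorem card_inter_avoid_le [Nonempty α] {x : ℝ} (hx₀ : 0 ≤ x) (hx₁ : x ≤ 1)
    (hdep : ∀ k, DependsOn (· ∈ A k) (vbl k))
    (hΓ : ∀ k l, l ≠ k → l ∉ Γ k → Disjoint (vbl k) (vbl l))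
    (hA : ∀ k, (#(A k) : ℝ) ≤ x * (1 - x) ^ #(Γ k) * Fintype.card (V → α))
    (S : Finset ι) (k : ι) :
    (#(A k ∩ avoid A S) : ℝ) ≤ x * #(avoid A S) := by
  -- The events outside `Γ k` are independent of `A k`; conditioning on each of the at most
  -- `#(Γ k)` others shrinks the space by a factor of at least `1 - x`, by induction.
  induction S using Finset.strongInduction generalizing k with
  | H S ih =>
  by_cases hkS : k ∈ S
  · have : A k ∩ avoid A S = ∅ :=
      eq_empty_of_forall_notMem fun c hc => mem_avoid.1 (mem_inter.1 hc).2 k hkS (mem_inter.1 hc).1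
    rw [this, card_empty, Nat.cast_zero]
    positivity
  set far := S.filter (· ∉ Γ k)
  set near := S.filter (· ∈ Γ k)
  have hfar : DependsOn (· ∈ avoid A far) (vbl k)ᶜ := dependsOn_mem_avoid fun l hl =>
    have hl := mem_filter.1 hl
    (hdep l).mono (hΓ k l (ne_of_mem_of_not_mem hl.1 hkS) hl.2).symm.subset_compl_right
  have h_far : (#(A k ∩ avoid A far) : ℝ) ≤ x * (1 - x) ^ #(Γ k) * #(avoid A far) := by
    have hΩ : (0 : ℝ) < Fintype.card (V → α) := by exact_mod_cast Fintype.card_pos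
    have hindep : (#(A k ∩ avoid A far) : ℝ) * Fintype.card (V → α)
        = #(A k) * #(avoid A far) := by
      exact_mod_cast card_inter_mul_card_univ (hdep k) hfar
    refine le_of_mul_le_mul_right ?_ hΩ
    rw [hindep, mul_right_comm]
    exact mul_le_mul_of_nonneg_right (hA k) (Nat.cast_nonneg _)
  have h_near : (1 - x) ^ #near * #(avoid A far) ≤ #(avoid A S) := by
    have := pow_mul_card_avoid_le hx₁ far (T := near) fun T' hT' j hj hjT' => ih _ ?_ j
    · rwa [union_comm, filter_union_filter_not_eq] at this
    refine (ssubset_iff_of_subset (union_subset (filter_subset _ _)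
      (hT'.trans (filter_subset _ _)))).2 ⟨j, (mem_filter.1 hj).1, ?_⟩
    simp [(mem_filter.1 hj).2, hjT']
  have h_pow : (1 - x) ^ #(Γ k) ≤ (1 - x) ^ #near :=
    pow_le_pow_of_le_one (sub_nonneg.2 hx₁) (by linarith)
      (card_le_card fun l hl => (mem_filter.1 hl).2)
  calc (#(A k ∩ avoid A S) : ℝ) ≤ #(A k ∩ avoid A far) := by
        gcongr; exact avoid_anti (filter_subset _ _)
    _ ≤ x * (1 - x) ^ #(Γ k) * #(avoid A far) := h_far
    _ ≤ x * ((1 - x) ^ #near * #(avoid A far)) := by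
        rw [mul_assoc]; gcongr
    _ ≤ x * #(avoid A S) := by gcongr

theorem exists_forall_notMem [Nonempty α] [Fintype ι] {x : ℝ} (hx₀ : 0 ≤ x) (hx₁ : x < 1)
    (hdep : ∀ k, DependsOn (· ∈ A k) (vbl k))
    (hΓ : ∀ k l, l ≠ k → l ∉ Γ k → Disjoint (vbl k) (vbl l))
    (hA : ∀ k, (#(A k) : ℝ) ≤ x * (1 - x) ^ #(Γ k) * Fintype.card (V → α)) :
    ∃ c : V → α, ∀ k, c ∉ A k := by
  have h := pow_mul_card_avoid_le hx₁.le ∅ (T := univ) fun T' _ j _ _ =>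
    card_inter_avoid_le hx₀ hx₁.le hdep hΓ hA _ j
  rw [avoid_empty, empty_union, card_univ] at h
  have hpos : (0 : ℝ) < #(avoid A univ) := by
    refine lt_of_lt_of_le ?_ h
    have : (0 : ℝ) < Fintype.card (V → α) := by exact_mod_cast Fintype.card_pos
    have : 0 < 1 - x := by linarith
    positivity
  obtain ⟨c, hc⟩ := card_pos.1 (by exact_mod_cast hpos)
  exact ⟨c, fun k => mem_avoid.1 hc k (mem_univ k)⟩

theorem exists_forall_notMem_of_symmetric [Nonempty α] [Fintype ι] {p D : ℝ} (hD : 0 < D)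
    (hdep : ∀ k, DependsOn (· ∈ A k) (vbl k))
    (hΓ : ∀ k l, l ≠ k → l ∉ Γ k → Disjoint (vbl k) (vbl l))
    (hΓD : ∀ k, (#(Γ k) : ℝ) ≤ D)
    (hA : ∀ k, (#(A k) : ℝ) ≤ p * Fintype.card (V → α))
    (hp : Real.exp 1 * p * (D + 1) ≤ 1) :
    ∃ c : V → α, ∀ k, c ∉ A k := by
  refine exists_forall_notMem (x := 1 / (D + 1)) (by positivity)
    ((div_lt_one (by linarith)).2 (by linarith)) hdep hΓ fun k => (hA k).trans ?_
  gcongr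
  calc p ≤ 1 / (Real.exp 1 * (D + 1)) := by
        rw [le_div_iff₀ (by positivity)]; linarith
    _ = 1 / (D + 1) * Real.exp (-1) := by
        rw [Real.exp_neg]; field_simp
    _ ≤ 1 / (D + 1) * (1 - 1 / (D + 1)) ^ #(Γ k) := by
        gcongr; exact exp_neg_one_le_one_sub_inv_pow hD (hΓD k)

end LovaszLocalLemma

theorem two_rpow_mul_one_sub_pow_le_exp {K d : ℕ} (hK : 0 < K) {t : ℝ} (ht : 0 ≤ t)
    (hd : 2 * K * t ≤ d) : 2 ^ t * (1 - 1 / (2 * K)) ^ d ≤ Real.exp (-t / 4) := by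
  have hK' : (1 : ℝ) ≤ K := by exact_mod_cast hK
  have h_two : (2 : ℝ) ^ t ≤ Real.exp (3 / 4 * t) := by
    rw [Real.rpow_def_of_pos two_pos, Real.exp_le_exp]
    have := Real.log_two_lt_d9
    nlinarith
  have h_base : (0 : ℝ) ≤ 1 - 1 / (2 * K) := by
    rw [sub_nonneg, div_le_one (by positivity)]; linarith
  have h_pow : (1 - 1 / (2 * K) : ℝ) ^ d ≤ Real.exp (-t) := by
    calc (1 - 1 / (2 * K) : ℝ) ^ d ≤ Real.exp (-(1 / (2 * K))) ^ d := by
          gcongr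
          linarith [Real.add_one_le_exp (-(1 / (2 * K : ℝ)))]
      _ = Real.exp (-(d / (2 * K))) := by rw [← Real.exp_nat_mul]; ring_nf
      _ ≤ Real.exp (-t) := by
          rw [Real.exp_le_exp, neg_le_neg_iff, le_div_iff₀ (by positivity)]; linarith
  calc 2 ^ t * (1 - 1 / (2 * K)) ^ d ≤ Real.exp (3 / 4 * t) * Real.exp (-t) :=
        mul_le_mul h_two h_pow (pow_nonneg h_base d) (Real.exp_pos _).le
    _ = Real.exp (-t / 4) := by rw [← Real.exp_add]; ring_nf

section Chernoff

variable {V α : Type*} [Fintype V] [DecidableEq V] [Fintype α]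

theorem sum_prod_apply_eq_pow_mul_pow (s : Finset V) (g : α → ℝ) :
    ∑ c : V → α, ∏ u ∈ s, g (c u)
      = (∑ j, g j) ^ #s * (Fintype.card α : ℝ) ^ #sᶜ := by
  calc ∑ c : V → α, ∏ u ∈ s, g (c u)
        = ∑ c : V → α, ∏ u, (if u ∈ s then g (c u) else 1) :=
          sum_congr rfl fun c _ => (Fintype.prod_ite_mem s _).symm
    _ = ∏ u, ∑ j, (if u ∈ s then g j else 1) := by rw [Fintype.prod_sum]
    _ = ∏ u, (if u ∈ s then ∑ j, g j else (Fintype.card α : ℝ)) := by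
          congr 1; funext u; split_ifs <;> simp
    _ = (∑ j, g j) ^ #s * (Fintype.card α : ℝ) ^ #sᶜ := by
          rw [prod_ite, prod_const, prod_const, filter_mem_eq_inter, univ_inter, ← compl_filter,
            filter_mem_eq_inter, univ_inter]

theorem card_filter_card_filter_lt_le [DecidableEq α] [Nonempty α] (s : Finset V) (i : α)
    (t : ℝ) :
    (#{c : V → α | (#{u ∈ s | c u = i} : ℝ) < t} : ℝ)
      ≤ 2 ^ t * (1 - 1 / (2 * Fintype.card α)) ^ #s
        * (Fintype.card α : ℝ) ^ Fintype.card V := by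
  set X : (V → α) → ℕ := fun c => #{u ∈ s | c u = i}
  set w : α → ℝ := fun j => if j = i then 1 / 2 else 1
  have weight (c : V → α) : (1 / 2 : ℝ) ^ X c = ∏ u ∈ s, w (c u) := by
    rw [prod_ite, prod_const, prod_const_one, mul_one]
  have markov {c : V → α} (hc : (X c : ℝ) < t) : 1 ≤ (2 : ℝ) ^ t * (1 / 2) ^ X c := by
    rw [one_div_pow, ← Real.rpow_natCast, mul_one_div, ← Real.rpow_sub two_pos]
    exact Real.one_le_rpow one_le_two (by linarith)
  have hsum : ∑ j, w j = Fintype.card α - 1 / 2 := by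
    rw [sum_ite, sum_const, sum_const, filter_eq', filter_ne']
    simp [card_univ, Nat.cast_sub Fintype.card_pos]
    ring
  calc (#{c : V → α | (X c : ℝ) < t} : ℝ)
        = ∑ c ∈ {c : V → α | (X c : ℝ) < t}, (1 : ℝ) := by simp
    _ ≤ ∑ c ∈ {c : V → α | (X c : ℝ) < t}, (2 : ℝ) ^ t * (1 / 2) ^ X c :=
        sum_le_sum fun c hc => markov (mem_filter.1 hc).2
    _ ≤ ∑ c, (2 : ℝ) ^ t * (1 / 2) ^ X c :=
        sum_le_sum_of_subset_of_nonneg (subset_univ _) fun _ _ _ => by positivity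
    _ = 2 ^ t * ((Fintype.card α - 1 / 2) ^ #s * (Fintype.card α : ℝ) ^ #sᶜ) := by
        simp_rw [← mul_sum, weight, sum_prod_apply_eq_pow_mul_pow s w, hsum]
    _ = _ := by
        have : (Fintype.card α : ℝ) - 1 / 2
            = (1 - 1 / (2 * Fintype.card α)) * Fintype.card α := by
          field_simp
        rw [this, mul_pow, ← card_add_card_compl s, pow_add]
        ring

theorem card_filter_card_filter_lt_le_exp [DecidableEq α] [Nonempty α] {s : Finset V} (i : α)
    {t : ℝ} (ht : 0 ≤ t) (hs : 2 * Fintype.card α * t ≤ #s) :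
    (#{c : V → α | (#{u ∈ s | c u = i} : ℝ) < t} : ℝ)
      ≤ Real.exp (-t / 4) * Fintype.card (V → α) := by
  rw [Fintype.card_fun, Nat.cast_pow]
  exact (card_filter_card_filter_lt_le s i t).trans <| mul_le_mul_of_nonneg_right
    (two_rpow_mul_one_sub_pow_le_exp Fintype.card_pos ht hs) (by positivity)

end Chernoff

namespace SimpleGraph

variable {V : Type*} [Fintype V] [DecidableEq V] (G : SimpleGraph V) [DecidableRel G.Adj]

def twoStepFinset (v : V) : Finset V := (G.neighborFinset v).biUnion (G.neighborFinset ·)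

theorem disjoint_neighborSet_of_notMem_twoStepFinset {v w : V}
    (hw : w ∉ G.twoStepFinset v) :
    Disjoint (G.neighborSet v) (G.neighborSet w) :=
  Set.disjoint_left.2 fun u hv hw' =>
    hw <| mem_biUnion.2 ⟨u, (G.mem_neighborFinset v u).2 hv,
      (G.mem_neighborFinset u w).2 (G.adj_symm hw')⟩

theorem mem_twoStepFinset_self {v : V} (hv : 0 < G.degree v) :
    v ∈ G.twoStepFinset v := by
  obtain ⟨u, hu⟩ := card_pos.1 hv
  exact mem_biUnion.2
    ⟨u, hu, (G.mem_neighborFinset u v).2 (G.adj_symm ((G.mem_neighborFinset v u).1 hu))⟩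

theorem card_twoStepFinset_le {Δ : ℝ} (hΔ : ∀ v, (G.degree v : ℝ) ≤ Δ) (v : V) :
    (#(G.twoStepFinset v) : ℝ) ≤ Δ ^ 2 :=
  calc (#(G.twoStepFinset v) : ℝ)
        ≤ ∑ u ∈ G.neighborFinset v, (G.degree u : ℝ) := by exact_mod_cast card_biUnion_le
    _ ≤ ∑ _u ∈ G.neighborFinset v, Δ := sum_le_sum fun u _ => hΔ u
    _ = G.degree v * Δ := by rw [sum_const, nsmul_eq_mul, card_neighborFinset_eq_degree]
    _ ≤ Δ * Δ := by gcongr; exacts [(Nat.cast_nonneg _).trans (hΔ v), hΔ v]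
    _ = Δ ^ 2 := (sq Δ).symm

theorem card_erase_twoStepFinset_product_le {β : Type*} [Fintype β] [DecidableEq β] {Δ : ℝ}
    (hΔ : ∀ v, (G.degree v : ℝ) ≤ Δ) {v : V} (hv : 0 < G.degree v) (b : β) :
    (#((G.twoStepFinset v ×ˢ univ).erase (v, b)) : ℝ) ≤ Fintype.card β * Δ ^ 2 - 1 := by
  have hmem : (v, b) ∈ G.twoStepFinset v ×ˢ (univ : Finset β) :=
    mem_product.2 ⟨G.mem_twoStepFinset_self hv, mem_univ b⟩
  have h := card_erase_add_one hmem
  rw [card_product, card_univ] at h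
  have h' : (#((G.twoStepFinset v ×ˢ univ).erase (v, b)) : ℝ) + 1
      = #(G.twoStepFinset v) * Fintype.card β := by
    exact_mod_cast h
  nlinarith [G.card_twoStepFinset_le hΔ v, (Nat.cast_nonneg _ : (0 : ℝ) ≤ Fintype.card β)]

theorem exists_coloring_le_card_filter_neighborFinset [Nonempty V] {K : ℕ} (hK : 2 ≤ K)
    {δ Δ : ℝ} (hδ : 0 < δ) (h : (K : ℝ) * Δ ^ 2 * Real.exp (-δ / (8 * K) + 1) < 1)
    (hdeg : ∀ v, δ ≤ G.degree v ∧ (G.degree v : ℝ) ≤ Δ) :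
    ∃ c : V → Fin K, ∀ v i, δ / (2 * K) ≤ #{u ∈ G.neighborFinset v | c u = i} := by
  have : Nonempty (Fin K) := ⟨⟨0, by omega⟩⟩
  have hdeg_pos (v : V) : 0 < G.degree v := by exact_mod_cast hδ.trans_le (hdeg v).1
  have hΔ : 1 ≤ Δ := by
    obtain ⟨v⟩ := ‹Nonempty V›
    exact le_trans (by exact_mod_cast hdeg_pos v) (hdeg v).2
  set t := δ / (2 * K)
  have h2Kt : 2 * K * t = δ := by simp only [t]; field_simp
  let A (p : V × Fin K) : Finset (V → Fin K) :=
    {c | (#{u ∈ G.neighborFinset p.1 | c u = p.2} : ℝ) < t}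
  let Γ (p : V × Fin K) : Finset (V × Fin K) := (G.twoStepFinset p.1 ×ˢ univ).erase p
  have hdep (p : V × Fin K) : DependsOn (· ∈ A p) (G.neighborSet p.1) := fun c d hcd => by
    simp only [A, mem_filter, mem_univ, true_and]
    rw [filter_congr fun u hu => by rw [hcd u ((G.mem_neighborFinset _ u).1 hu)]]
  have hΓ (p q : V × Fin K) (hqp : q ≠ p) (hq : q ∉ Γ p) :
      Disjoint (G.neighborSet p.1) (G.neighborSet q.1) :=
    G.disjoint_neighborSet_of_notMem_twoStepFinset fun h => hq (by simp [Γ, hqp, h])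
  have hΓD (p : V × Fin K) : (#(Γ p) : ℝ) ≤ K * Δ ^ 2 - 1 := by
    simpa using G.card_erase_twoStepFinset_product_le (fun v => (hdeg v).2) (hdeg_pos p.1) p.2
  have hA (p : V × Fin K) :
      (#(A p) : ℝ) ≤ Real.exp (-δ / (8 * K)) * Fintype.card (V → Fin K) := by
    rw [show -δ / (8 * K) = -t / 4 by ring]
    exact card_filter_card_filter_lt_le_exp p.2 (by positivity)
      (by rw [Fintype.card_fin, h2Kt]; exact (hdeg p.1).1)
  have hKΔ : 2 ≤ (K : ℝ) * Δ ^ 2 := by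
    have : (2 : ℝ) ≤ K := by exact_mod_cast hK
    nlinarith [one_le_pow₀ (n := 2) hΔ]
  obtain ⟨c, hc⟩ := LovaszLocalLemma.exists_forall_notMem_of_symmetric
    (by linarith : 0 < (K : ℝ) * Δ ^ 2 - 1) hdep hΓ hΓD hA (by
      rw [sub_add_cancel]; rw [Real.exp_add] at h; linarith)
  exact ⟨c, fun v i => by simpa [A] using hc (v, i)⟩

end SimpleGraph

theorem stmt_10_general (K : ℕ) (δ Δ : ℝ)
    (h : (K : ℝ) * Δ^2 * Real.exp (-δ/(8*K) + 1) < 1)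
    {V : Type*} [Fintype V] (H : SimpleGraph V)
    (hdeg : ∀ v, δ ≤ ((H.neighborSet v).ncard : ℝ) ∧ ((H.neighborSet v).ncard : ℝ) ≤ Δ) :
    ∃ S : Fin K → Set V,
      (∀ i j, i ≠ j → Disjoint (S i) (S j)) ∧
      ∀ (v : V) (i : Fin K), δ / (2*K) ≤ ((H.neighborSet v ∩ S i).ncard : ℝ) := by
  classical
  rcases le_or_gt δ 0 with hδ | hδ
  · exact ⟨fun _ => ∅, by simp, fun _ _ =>
      (div_nonpos_of_nonpos_of_nonneg hδ (by positivity)).trans (Nat.cast_nonneg _)⟩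
  rcases isEmpty_or_nonempty V with hV | hV
  · exact ⟨fun _ => ∅, by simp, fun v => isEmptyElim v⟩
  have hncard (v : V) (s : Set V) :
      (H.neighborSet v ∩ s).ncard = #{u ∈ H.neighborFinset v | u ∈ s} := by
    rw [← Set.ncard_coe_finset, coe_filter]
    congr 1; ext u; simp
  have hdegree (v : V) : (H.neighborSet v).ncard = H.degree v := by
    simpa using hncard v Set.univ
  obtain rfl | rfl | hK : K = 0 ∨ K = 1 ∨ 2 ≤ K := by omega
  · exact ⟨fun _ => ∅, fun i => i.elim0, fun _ i => i.elim0⟩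
  · refine ⟨fun _ => Set.univ, fun i j hij => (hij (Subsingleton.elim i j)).elim,
      fun v _ => ?_⟩
    simp only [Set.inter_univ, Nat.cast_one, mul_one]
    linarith [(hdeg v).1]
  obtain ⟨c, hc⟩ :=
    H.exists_coloring_le_card_filter_neighborFinset hK hδ h (by simpa only [hdegree] using hdeg)
  refine ⟨fun i => c ⁻¹' {i}, fun i j hij => Set.disjoint_left.2 fun v hi hj => ?_,
    fun v i => by simpa [hncard] using hc v i⟩
  exact hij (hi.symm.trans hj)

/-- **Lemma 4.4 (splitting vertex degrees).** Let `K` be a positive integer and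
`δ, Δ` reals with `K Δ² e^{-δ/(8K) + 1} < 1`. Let `H` be a graph in which every
vertex `v` satisfies `δ ≤ d(v) ≤ Δ`. Then `H` contains `K` pairwise disjoint
vertex sets `S₁, …, S_K` such that every vertex of `H` has at least `δ/(2K)`
neighbors in each `S_i`. -/
theorem stmt_10 (K : ℕ) (hK : 0 < K) (δ Δ : ℝ)
    (h : (K : ℝ) * Δ^2 * Real.exp (-δ/(8*K) + 1) < 1)
    {V : Type*} [Fintype V] (H : SimpleGraph V)
    (hdeg : ∀ v, δ ≤ ((H.neighborSet v).ncard : ℝ) ∧ ((H.neighborSet v).ncard : ℝ) ≤ Δ) :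
    ∃ S : Fin K → Set V,
      (∀ i j, i ≠ j → Disjoint (S i) (S j)) ∧
      ∀ (v : V) (i : Fin K), δ / (2*K) ≤ ((H.neighborSet v ∩ S i).ncard : ℝ) :=
  stmt_10_general K δ Δ h H hdeg
end
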